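/- Let n ≥ 1, γ ∈ ℝ, and let I ⊆ ℝ be an open interval. Let ρ, Φ : I × ℝⁿ → ℝ be smooth with ρ(t,x) > 0 for all (t,x), satisfying ∂_t ρ + ∇·(ρ^γ ∇Φ) = 0 and ∂_t Φ + (γ/2)·ρ^{γ−1}·‖∇Φ‖² = 0 on I × ℝⁿ, and set v(t,x) = ρ(t,x)^{γ−1}·∇Φ(t,x). Let X : I → ℝⁿ be twice differentiable with dX/dt (t) = v(t, X(t)) for all t ∈ I. Then for every t ∈ I: d²X/dt²(t) + ((γ−1)/2)·(∇‖v‖²)(t, X(t)) + (γ−1)·(∇·v)(t, X(t))·(dX/dt)(t) − ((γ−2)(γ−1)/2)·(∇log ρ)(t, X(t))·‖(dX/dt)(t)‖² = 0. -/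

import Mathlib

/-!
Along the trajectory, `X'' = d/dt (ρ^{γ-1} ∂ᵢΦ)(t, X t)` is a material derivative `∂ₜ + X'·∇` of
`ρ^{γ-1}` and of `∂ᵢΦ`. The continuity equation eliminates `∂ₜρ`; the spatial derivative of the
Hamilton–Jacobi equation eliminates `∂ₜ∂ᵢΦ = ∂ᵢ∂ₜΦ`; and, since `X'` is parallel to `∇Φ`, the
symmetry of the Hessian of `Φ` turns `X'·∇(∂ᵢΦ)` into a multiple of `∂ᵢ‖∇Φ‖²`. What remains is a
polynomial identity in `ρ^γ`, `ρ⁻¹` and the first and second derivatives of `ρ` and `Φ` at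
`(t, X t)`.
-/

open MeasureTheory Filter Set
open scoped InnerProductSpace Topology

/-- Partial derivative `∂ⱼ f x` on Euclidean space. -/
noncomputable def pder (n : ℕ) (j : Fin n) (f : EuclideanSpace ℝ (Fin n) → ℝ)
    (x : EuclideanSpace ℝ (Fin n)) : ℝ :=
  fderiv ℝ f x (EuclideanSpace.single j 1)

/-- Divergence `∇·v` of a vector field on Euclidean space. -/
noncomputable def divg (n : ℕ) (v : EuclideanSpace ℝ (Fin n) → EuclideanSpace ℝ (Fin n))
    (x : EuclideanSpace ℝ (Fin n)) : ℝ :=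
  ∑ j, pder n j (fun y => v y j) x

/-- Laplacian `Δf = ∑ⱼ ∂ⱼ∂ⱼ f`. -/
noncomputable def lapl (n : ℕ) (f : EuclideanSpace ℝ (Fin n) → ℝ)
    (x : EuclideanSpace ℝ (Fin n)) : ℝ :=
  ∑ j, pder n j (fun y => pder n j f y) x

/-- Entry `(i,j)` of the Hessian matrix of `f`. -/
noncomputable def hessij (n : ℕ) (f : EuclideanSpace ℝ (Fin n) → ℝ)
    (x : EuclideanSpace ℝ (Fin n)) (i j : Fin n) : ℝ :=
  pder n i (fun y => pder n j f y) x

/-- Hessian quadratic form `Hess f (u,u) = ∑ᵢⱼ (∂ᵢ∂ⱼf) uᵢ uⱼ`. -/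
noncomputable def hessQF (n : ℕ) (f : EuclideanSpace ℝ (Fin n) → ℝ)
    (x u : EuclideanSpace ℝ (Fin n)) : ℝ :=
  ∑ i, ∑ j, hessij n f x i j * u i * u j

/-- Squared Frobenius norm of the Hessian: `‖Hess f‖² = ∑ᵢⱼ (∂ᵢ∂ⱼf)²`. -/
noncomputable def hessFrob (n : ℕ) (f : EuclideanSpace ℝ (Fin n) → ℝ)
    (x : EuclideanSpace ℝ (Fin n)) : ℝ :=
  ∑ i, ∑ j, (hessij n f x i j)^2

open Function

section Differentiation

variable {G H : Type*} [NormedAddCommGroup G] [NormedSpace ℝ G] [NormedAddCommGroup H]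
  [NormedSpace ℝ H] {f : G → H} {p : G} {F : ℝ → G → H} {t : ℝ} {x : G}

theorem fderiv_fun_fderiv_apply (hf : DifferentiableAt ℝ (fderiv ℝ f) p) (v w : G) :
    fderiv ℝ (fun q => fderiv ℝ f q w) p v = fderiv ℝ (fderiv ℝ f) p v w := by
  rw [fderiv_clm_apply hf (differentiableAt_const w)]
  simp

theorem ContDiffAt.differentiableAt_fderiv (hf : ContDiffAt ℝ 2 f p) :
    DifferentiableAt ℝ (fderiv ℝ f) p :=
  (hf.fderiv_right (m := 1) (by norm_num)).differentiableAt one_ne_zero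

theorem ContDiffAt.eventually_differentiableAt (hf : ContDiffAt ℝ 1 f p) :
    ∀ᶠ q in 𝓝 p, DifferentiableAt ℝ f q :=
  (hf.eventually (by simp)).mono fun _ hq => hq.differentiableAt one_ne_zero

theorem deriv_apply_eq_fderiv_uncurry (hF : DifferentiableAt ℝ (uncurry F) (t, x)) :
    deriv (fun s => F s x) t = fderiv ℝ (uncurry F) (t, x) (1, 0) := by
  have h : HasDerivAt (fun s => F s x) (fderiv ℝ (uncurry F) (t, x) (1, 0)) t :=
    HasFDerivAt.comp_hasDerivAt (l := uncurry F) t hF.hasFDerivAt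
      ((hasDerivAt_id t).prodMk (hasDerivAt_const t x))
  exact h.deriv

theorem fderiv_apply_eq_fderiv_uncurry (hF : DifferentiableAt ℝ (uncurry F) (t, x)) (w : G) :
    fderiv ℝ (F t) x w = fderiv ℝ (uncurry F) (t, x) (0, w) := by
  have h : HasFDerivAt (F t) ((fderiv ℝ (uncurry F) (t, x)).comp (.inr ℝ ℝ G)) x :=
    hF.hasFDerivAt.comp x (hasFDerivAt_prodMk_right t x)
  simp [h.fderiv]

theorem hasDerivAt_comp_uncurry {X : ℝ → G} {V : G}
    (hF : DifferentiableAt ℝ (uncurry F) (t, X t)) (hX : HasDerivAt X V t) :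
    HasDerivAt (fun s => F s (X s)) (deriv (fun s => F s (X t)) t + fderiv ℝ (F t) (X t) V) t := by
  have hcurve : HasDerivAt (fun s => (s, X s)) (1, V) t := (hasDerivAt_id t).prodMk hX
  rw [deriv_apply_eq_fderiv_uncurry hF, fderiv_apply_eq_fderiv_uncurry hF, ← map_add,
    Prod.mk_add_mk, add_zero, zero_add]
  exact hF.hasFDerivAt.comp_hasDerivAt t hcurve

theorem ContDiffAt.of_uncurry {k : WithTop ℕ∞} (hF : ContDiffAt ℝ k (uncurry F) (t, x)) :
    ContDiffAt ℝ k (F t) x :=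
  hF.comp x (contDiffAt_const.prodMk contDiffAt_id)

end Differentiation

section Spatial

variable {n : ℕ} {f g φ : EuclideanSpace ℝ (Fin n) → ℝ} {x : EuclideanSpace ℝ (Fin n)}

local notation "E" => EuclideanSpace ℝ (Fin n)

theorem gradient_apply_eq_pder (f : E → ℝ) (x : E) (j : Fin n) :
    gradient f x j = pder n j f x := by
  have h := InnerProductSpace.toDual_symm_apply (x := EuclideanSpace.single j (1 : ℝ))
    (y := fderiv ℝ f x)
  rw [EuclideanSpace.inner_single_right] at h
  simpa [gradient, pder] using h

theorem fderiv_apply_eq_sum_pder (f : E → ℝ) (x w : E) :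
    fderiv ℝ f x w = ∑ j, w j * pder n j f x := by
  conv_lhs => rw [← (EuclideanSpace.basisFun (Fin n) ℝ).sum_repr w]
  simp [pder]

theorem pder_const_mul (a : ℝ) (j : Fin n) :
    pder n j (fun y => a * f y) x = a * pder n j f x := by
  simp only [pder]
  rw [show (fun y => a * f y) = a • f from rfl, fderiv_const_smul_field]
  rfl

theorem pder_mul (hf : DifferentiableAt ℝ f x) (hg : DifferentiableAt ℝ g x) (j : Fin n) :
    pder n j (fun y => f y * g y) x = f x * pder n j g x + g x * pder n j f x := by
  simp [pder, fderiv_fun_mul hf hg]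

theorem pder_rpow_const (hf : DifferentiableAt ℝ f x) (hx : f x ≠ 0) (c : ℝ) (j : Fin n) :
    pder n j (fun y => f y ^ c) x = c * f x ^ (c - 1) * pder n j f x := by
  simp [pder, (hf.hasFDerivAt.rpow_const (p := c) (Or.inl hx)).fderiv]

theorem pder_pow (hf : DifferentiableAt ℝ f x) (m : ℕ) (j : Fin n) :
    pder n j (fun y => f y ^ m) x = m * f x ^ (m - 1) * pder n j f x := by
  simp [pder, fderiv_fun_pow m hf]

theorem pder_log (hf : DifferentiableAt ℝ f x) (hx : f x ≠ 0) (j : Fin n) :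
    pder n j (fun y => Real.log (f y)) x = pder n j f x / f x := by
  simp [pder, (hf.hasFDerivAt.log hx).fderiv]
  ring

theorem pder_sum {F : Fin n → E → ℝ} (hF : ∀ k, DifferentiableAt ℝ (F k) x) (j : Fin n) :
    pder n j (fun y => ∑ k, F k y) x = ∑ k, pder n j (F k) x := by
  simp [pder, fderiv_fun_sum fun k _ => hF k]

theorem ContDiffAt.differentiableAt_pder (hφ : ContDiffAt ℝ 2 φ x) (j : Fin n) :
    DifferentiableAt ℝ (pder n j φ) x :=
  hφ.differentiableAt_fderiv.clm_apply (differentiableAt_const _)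

theorem ContDiffAt.hessij_comm (hφ : ContDiffAt ℝ 2 φ x) (i j : Fin n) :
    hessij n φ x i j = hessij n φ x j i := by
  simp only [hessij, pder]
  rw [fderiv_fun_fderiv_apply hφ.differentiableAt_fderiv,
    fderiv_fun_fderiv_apply hφ.differentiableAt_fderiv,
    (hφ.isSymmSndFDerivAt (by simp)).eq]

theorem ContDiffAt.differentiableAt_norm_gradient_sq (hφ : ContDiffAt ℝ 2 φ x) :
    DifferentiableAt ℝ (fun y => ‖gradient φ y‖ ^ 2) x :=
  (((InnerProductSpace.toDual ℝ E).symm.toContinuousLinearEquiv.differentiableAt).comp x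
    hφ.differentiableAt_fderiv).norm_sq ℝ

theorem norm_gradient_sq_eq_sum (φ : E → ℝ) (y : E) :
    ‖gradient φ y‖ ^ 2 = ∑ j, pder n j φ y ^ 2 := by
  simp [EuclideanSpace.norm_sq_eq, gradient_apply_eq_pder]

theorem ContDiffAt.pder_norm_gradient_sq (hφ : ContDiffAt ℝ 2 φ x) (i : Fin n) :
    pder n i (fun y => ‖gradient φ y‖ ^ 2) x = 2 * fderiv ℝ (pder n i φ) x (gradient φ x) := by
  have hφj := hφ.differentiableAt_pder
  simp only [norm_gradient_sq_eq_sum]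
  rw [pder_sum (F := fun k y => pder n k φ y ^ 2) fun k => (hφj k).pow 2,
    fderiv_apply_eq_sum_pder, Finset.mul_sum]
  refine Finset.sum_congr rfl fun k _ => ?_
  have := hφ.hessij_comm i k
  simp only [hessij] at this
  rw [pder_pow (hφj k), gradient_apply_eq_pder, this]
  push_cast
  ring

theorem divg_rpow_smul_gradient (hf : DifferentiableAt ℝ f x) (hx : f x ≠ 0)
    (hφ : ContDiffAt ℝ 2 φ x) (c : ℝ) :
    divg n (fun y => f y ^ c • gradient φ y) x
      = f x ^ c * lapl n φ x + c * f x ^ (c - 1) * fderiv ℝ f x (gradient φ x) := by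
  simp only [divg, lapl, PiLp.smul_apply, smul_eq_mul, gradient_apply_eq_pder,
    fderiv_apply_eq_sum_pder f x, Finset.mul_sum, ← Finset.sum_add_distrib]
  refine Finset.sum_congr rfl fun j _ => ?_
  rw [pder_mul (hf.rpow_const (Or.inl hx)) (hφ.differentiableAt_pder j), pder_rpow_const hf hx]
  ring

theorem pder_rpow_mul_norm_gradient_sq (hf : DifferentiableAt ℝ f x) (hx : f x ≠ 0)
    (hφ : ContDiffAt ℝ 2 φ x) (c : ℝ) (i : Fin n) :
    pder n i (fun y => f y ^ c * ‖gradient φ y‖ ^ 2) x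
      = f x ^ c * (2 * fderiv ℝ (pder n i φ) x (gradient φ x))
        + ‖gradient φ x‖ ^ 2 * (c * f x ^ (c - 1) * pder n i f x) := by
  rw [pder_mul (hf.rpow_const (Or.inl hx)) hφ.differentiableAt_norm_gradient_sq,
    hφ.pder_norm_gradient_sq, pder_rpow_const hf hx]

theorem pder_norm_rpow_smul_gradient_sq (hf : DifferentiableAt ℝ f x) (hx : f x ≠ 0)
    (hφ : ContDiffAt ℝ 2 φ x) (c : ℝ) (i : Fin n) :
    pder n i (fun y => ‖f y ^ c • gradient φ y‖ ^ 2) x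
      = (f x ^ c) ^ 2 * (2 * fderiv ℝ (pder n i φ) x (gradient φ x))
        + ‖gradient φ x‖ ^ 2 * (2 * f x ^ c * (c * f x ^ (c - 1) * pder n i f x)) := by
  have hfc := hf.rpow_const (p := c) (Or.inl hx)
  simp only [norm_smul, mul_pow, Real.norm_eq_abs, sq_abs]
  rw [pder_mul (f := fun y => (f y ^ c) ^ 2) (hfc.pow 2) hφ.differentiableAt_norm_gradient_sq,
    hφ.pder_norm_gradient_sq, pder_pow hfc, pder_rpow_const hf hx]
  push_cast
  ring

theorem gradient_log_apply (hf : DifferentiableAt ℝ f x) (hx : f x ≠ 0) (j : Fin n) :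
    gradient (fun y => Real.log (f y)) x j = pder n j f x / f x := by
  rw [gradient_apply_eq_pder, pder_log hf hx]

end Spatial

section MixedPartials

variable {n : ℕ} {F : ℝ → EuclideanSpace ℝ (Fin n) → ℝ} {t : ℝ} {x : EuclideanSpace ℝ (Fin n)}

theorem ContDiffAt.differentiableAt_uncurry_pder (hF : ContDiffAt ℝ 2 (uncurry F) (t, x))
    (i : Fin n) : DifferentiableAt ℝ (uncurry fun s => pder n i (F s)) (t, x) := by
  refine (hF.differentiableAt_fderiv.clm_apply
    (differentiableAt_const ((0 : ℝ), EuclideanSpace.single i 1))).congr_of_eventuallyEq ?_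
  filter_upwards [(hF.of_le one_le_two).eventually_differentiableAt] with q hq
  exact fderiv_apply_eq_fderiv_uncurry (t := q.1) (x := q.2) hq _

theorem ContDiffAt.pder_deriv_comm (hF : ContDiffAt ℝ 2 (uncurry F) (t, x)) (i : Fin n) :
    pder n i (fun y => deriv (fun s => F s y) t) x = deriv (fun s => pder n i (F s) x) t := by
  set F' := fderiv ℝ (uncurry F)
  have hF' : DifferentiableAt ℝ F' (t, x) := hF.differentiableAt_fderiv
  have hev := (hF.of_le one_le_two).eventually_differentiableAt
  have hspace : (fun y => deriv (fun s => F s y) t) =ᶠ[𝓝 x] fun y => F' (t, y) (1, 0) :=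
    ((Continuous.prodMk_right t).tendsto x |>.eventually hev).mono fun y hy =>
      deriv_apply_eq_fderiv_uncurry hy
  have htime : (fun s => pder n i (F s) x) =ᶠ[𝓝 t]
      fun s => F' (s, x) (0, EuclideanSpace.single i 1) :=
    ((Continuous.prodMk_left x).tendsto t |>.eventually hev).mono fun s hs =>
      fderiv_apply_eq_fderiv_uncurry hs _
  have hd : ∀ w, DifferentiableAt ℝ (uncurry fun s y => F' (s, y) w) (t, x) := fun w =>
    hF'.clm_apply (differentiableAt_const w)
  rw [pder, hspace.fderiv_eq, htime.deriv_eq,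
    fderiv_apply_eq_fderiv_uncurry (F := fun s y => F' (s, y) (1, 0)) (hd _),
    deriv_apply_eq_fderiv_uncurry (F := fun s y => F' (s, y) (0, EuclideanSpace.single i 1))
      (hd _)]
  simp only [uncurry_def]
  rw [fderiv_fun_fderiv_apply hF', fderiv_fun_fderiv_apply hF',
    (hF.isSymmSndFDerivAt (by simp)).eq]

end MixedPartials

theorem deriv_deriv_apply_of_hasDerivAt_rpow_smul_gradient {n : ℕ}
    {ρ Φ : ℝ → EuclideanSpace ℝ (Fin n) → ℝ} {X : ℝ → EuclideanSpace ℝ (Fin n)} {c t : ℝ}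
    (hρ : DifferentiableAt ℝ (uncurry ρ) (t, X t)) (hΦ : ContDiffAt ℝ 2 (uncurry Φ) (t, X t))
    (hρ0 : ρ t (X t) ≠ 0)
    (hX : ∀ᶠ s in 𝓝 t, HasDerivAt X (ρ s (X s) ^ c • gradient (Φ s) (X s)) s)
    (hX' : DifferentiableAt ℝ (deriv X) t) (i : Fin n) :
    deriv (deriv X) t i =
      (deriv (fun s => ρ s (X t)) t + fderiv ℝ (ρ t) (X t) (deriv X t)) * c
          * ρ t (X t) ^ (c - 1) * pder n i (Φ t) (X t)
        + ρ t (X t) ^ c * (deriv (fun s => pder n i (Φ s) (X t)) t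
          + fderiv ℝ (pder n i (Φ t)) (X t) (deriv X t)) := by
  have hV : HasDerivAt X (deriv X t) t := hX.self_of_nhds.differentiableAt.hasDerivAt
  have hcomp : (fun s => deriv X s i) =ᶠ[𝓝 t] fun s => ρ s (X s) ^ c * pder n i (Φ s) (X s) :=
    hX.mono fun s hs => by
      show deriv X s i = _
      rw [hs.deriv, PiLp.smul_apply, smul_eq_mul, gradient_apply_eq_pder]
  have hproj : HasDerivAt (fun s => deriv X s i) (deriv (deriv X) t i) t :=
    (EuclideanSpace.proj (𝕜 := ℝ) i).hasFDerivAt.comp_hasDerivAt t hX'.hasDerivAt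
  exact hproj.unique ((((hasDerivAt_comp_uncurry hρ hV).rpow_const (Or.inl hρ0)).mul
    (hasDerivAt_comp_uncurry (hΦ.differentiableAt_uncurry_pder i) hV)).congr_of_eventuallyEq
      hcomp)

theorem stmt9_general (n : ℕ) (γ : ℝ)
    (I : Set ℝ) (hIopen : IsOpen I)
    (ρ Φ : ℝ → EuclideanSpace ℝ (Fin n) → ℝ)
    (hρ : ContDiffOn ℝ (⊤ : ℕ∞) (fun p : ℝ × EuclideanSpace ℝ (Fin n) => ρ p.1 p.2)
      (I ×ˢ univ))
    (hΦ : ContDiffOn ℝ (⊤ : ℕ∞) (fun p : ℝ × EuclideanSpace ℝ (Fin n) => Φ p.1 p.2)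
      (I ×ˢ univ))
    (hρpos : ∀ t ∈ I, ∀ x, 0 < ρ t x)
    (hcont : ∀ t ∈ I, ∀ x, deriv (fun s => ρ s x) t
      + divg n (fun y => (ρ t y)^γ • gradient (Φ t) y) x = 0)
    (hHJ : ∀ t ∈ I, ∀ x, deriv (fun s => Φ s x) t
      + (γ/2) * (ρ t x)^(γ-1) * ‖gradient (Φ t) x‖^2 = 0)
    (v : ℝ → EuclideanSpace ℝ (Fin n) → EuclideanSpace ℝ (Fin n))
    (hv : ∀ t x, v t x = (ρ t x)^(γ-1) • gradient (Φ t) x)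
    (X : ℝ → EuclideanSpace ℝ (Fin n))
    (hX : ∀ t ∈ I, HasDerivAt X (v t (X t)) t)
    (hX' : ∀ t ∈ I, DifferentiableAt ℝ (deriv X) t) :
    ∀ t ∈ I,
      deriv (deriv X) t
        + ((γ-1)/2) • gradient (fun y => ‖v t y‖^2) (X t)
        + ((γ-1) * divg n (v t) (X t)) • deriv X t
        - (((γ-2)*(γ-1)/2) * ‖deriv X t‖^2) • gradient (fun y => Real.log (ρ t y)) (X t)
      = 0 := by
  obtain rfl : v = fun t x => ρ t x ^ (γ - 1) • gradient (Φ t) x := funext₂ hv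
  intro t ht
  beta_reduce at hX ⊢
  have hU : I ×ˢ univ ∈ 𝓝 (t, X t) := (hIopen.prod isOpen_univ).mem_nhds ⟨ht, trivial⟩
  have hρ2 : ContDiffAt ℝ 2 (uncurry ρ) (t, X t) :=
    (hρ.contDiffAt hU).of_le (WithTop.coe_le_coe.mpr le_top)
  have hΦ2 : ContDiffAt ℝ 2 (uncurry Φ) (t, X t) :=
    (hΦ.contDiffAt hU).of_le (WithTop.coe_le_coe.mpr le_top)
  have hρx : DifferentiableAt ℝ (ρ t) (X t) := hρ2.of_uncurry.differentiableAt two_ne_zero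
  have hΦx : ContDiffAt ℝ 2 (Φ t) (X t) := hΦ2.of_uncurry
  have hr : 0 < ρ t (X t) := hρpos t ht (X t)
  have hρ_t : deriv (fun s => ρ s (X t)) t = -(ρ t (X t) ^ γ * lapl n (Φ t) (X t)
      + γ * ρ t (X t) ^ (γ - 1) * fderiv ℝ (ρ t) (X t) (gradient (Φ t) (X t))) := by
    rw [← divg_rpow_smul_gradient hρx hr.ne' hΦx]
    linarith [hcont t ht (X t)]
  have hΦ_t : (fun y => deriv (fun s => Φ s y) t)
      = fun y => -(γ / 2) * (ρ t y ^ (γ - 1) * ‖gradient (Φ t) y‖ ^ 2) :=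
    funext fun y => by linarith [hHJ t ht y]
  ext i
  have hacc := deriv_deriv_apply_of_hasDerivAt_rpow_smul_gradient
    (hρ2.differentiableAt two_ne_zero) hΦ2 hr.ne' (eventually_of_mem (hIopen.mem_nhds ht) hX)
    (hX' t ht) i
  rw [(hX t ht).deriv] at hacc ⊢
  rw [← hΦ2.pder_deriv_comm, hΦ_t, pder_const_mul,
    pder_rpow_mul_norm_gradient_sq hρx hr.ne' hΦx, hρ_t] at hacc
  simp only [PiLp.add_apply, PiLp.sub_apply, PiLp.smul_apply, smul_eq_mul, PiLp.zero_apply]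
  rw [hacc, gradient_apply_eq_pder, pder_norm_rpow_smul_gradient_sq hρx hr.ne' hΦx,
    divg_rpow_smul_gradient hρx hr.ne' hΦx, gradient_log_apply hρx hr.ne', gradient_apply_eq_pder,
    norm_smul, Real.norm_of_nonneg (Real.rpow_nonneg hr.le _)]
  simp only [map_smul, smul_eq_mul, Real.rpow_sub_one hr.ne']
  field_simp
  ring

/-- Lagrangian coordinates of the γ-Wasserstein geodesic flow.
If `(ρ, Φ)` solves the co-geodesic system, `v = ρ^{γ−1}∇Φ`, and `X` is a twice
differentiable trajectory with `X' (t) = v(t, X(t))`, then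
`X'' + ((γ−1)/2)∇‖v‖² + (γ−1)(∇·v)X' − ((γ−2)(γ−1)/2)(∇log ρ)‖X'‖² = 0`
along the trajectory. -/
theorem stmt9 (n : ℕ) (hn : 1 ≤ n) (γ : ℝ)
    (I : Set ℝ) (hIopen : IsOpen I) (hIconn : I.OrdConnected)
    (ρ Φ : ℝ → EuclideanSpace ℝ (Fin n) → ℝ)
    (hρ : ContDiffOn ℝ (⊤ : ℕ∞) (fun p : ℝ × EuclideanSpace ℝ (Fin n) => ρ p.1 p.2)
      (I ×ˢ univ))
    (hΦ : ContDiffOn ℝ (⊤ : ℕ∞) (fun p : ℝ × EuclideanSpace ℝ (Fin n) => Φ p.1 p.2)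
      (I ×ˢ univ))
    (hρpos : ∀ t ∈ I, ∀ x, 0 < ρ t x)
    (hcont : ∀ t ∈ I, ∀ x, deriv (fun s => ρ s x) t
      + divg n (fun y => (ρ t y)^γ • gradient (Φ t) y) x = 0)
    (hHJ : ∀ t ∈ I, ∀ x, deriv (fun s => Φ s x) t
      + (γ/2) * (ρ t x)^(γ-1) * ‖gradient (Φ t) x‖^2 = 0)
    (v : ℝ → EuclideanSpace ℝ (Fin n) → EuclideanSpace ℝ (Fin n))
    (hv : ∀ t x, v t x = (ρ t x)^(γ-1) • gradient (Φ t) x)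
    (X : ℝ → EuclideanSpace ℝ (Fin n))
    (hX : ∀ t ∈ I, HasDerivAt X (v t (X t)) t)
    (hX' : ∀ t ∈ I, DifferentiableAt ℝ (deriv X) t) :
    ∀ t ∈ I,
      deriv (deriv X) t
        + ((γ-1)/2) • gradient (fun y => ‖v t y‖^2) (X t)
        + ((γ-1) * divg n (v t) (X t)) • deriv X t
        - (((γ-2)*(γ-1)/2) * ‖deriv X t‖^2) • gradient (fun y => Real.log (ρ t y)) (X t)
      = 0 :=
  stmt9_general n γ I hIopen ρ Φ hρ hΦ hρpos hcont hHJ v hv X hX hX'
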